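/- arXiv:2203.05500 — 8 statements merged into one kernel-verified Lean document; each statement's English description precedes it below -/
import Mathlib

section
/- Let G be a finite group and ω a normalized 3-cocycle on G with values in ℂˣ. Then for all g, x, y, z ∈ G one has θ_g(x,y)·θ_g(x*y,z) = θ_{g^x}(y,z)·θ_g(x,y*z). -/
/-- Conjugation: `g^x = x⁻¹ * g * x`. -/
def cjg {G : Type*} [Group G] (g x : G) : G := x⁻¹ * g * x

/-- A normalized 3-cocycle on `G` with values in `ℂˣ`. -/
def IsNormalized3Cocycle {G : Type*} [Group G] (ω : G → G → G → ℂˣ) : Prop :=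
  (∀ x y z w, ω y z w * ω x (y * z) w * ω x y z = ω (x * y) z w * ω x y (z * w)) ∧
  (∀ x y z, (x = 1 ∨ y = 1 ∨ z = 1) → ω x y z = 1)

/-- `θ_g(x,y) = ω(g,x,y)·ω(x,y,g^{xy}) / ω(x,g^x,y)`. -/
def theta {G : Type*} [Group G] (ω : G → G → G → ℂˣ) (g x y : G) : ℂˣ :=
  ω g x y * ω x y (cjg g (x * y)) / ω x (cjg g x) y

/-- `γ_g(x,y) = ω(x,y,g)·ω(g,x^g,y^g) / ω(x,g,y^g)`. -/
def gam {G : Type*} [Group G] (ω : G → G → G → ℂˣ) (g x y : G) : ℂˣ :=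
  ω x y g * ω g (cjg x g) (cjg y g) / ω x g (cjg y g)

/-- A 2-coboundary of `G` with values in `ℂˣ`. -/
def Is2Coboundary {G : Type*} [Group G] (β : G → G → ℂˣ) : Prop :=
  ∃ f : G → ℂˣ, f 1 = 1 ∧ ∀ x y, β x y = f x * f y / f (x * y)

/-- A (normalized) 2-cocycle of `G` with values in `ℂˣ`. -/
def Is2Cocycle {G : Type*} [Group G] (β : G → G → ℂˣ) : Prop :=
  (∀ x, β x 1 = 1 ∧ β 1 x = 1) ∧
  (∀ x y z, β x y * β (x * y) z = β y z * β x (y * z))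

/-- An ω-admissible pair `(τ, ν)` for a subgroup `A`. -/
def IsAdmissiblePair {G : Type*} [Group G] (ω : G → G → G → ℂˣ) (A : Subgroup G)
    (τ : A → G → ℂˣ) (ν : A → (G →* ℂˣ)) : Prop :=
  (∀ x, τ 1 x = 1) ∧ (∀ a, τ a 1 = 1) ∧
  (∀ (a : A) (x y : G), theta ω (a : G) x y = τ a x * τ a y / τ a (x * y)) ∧
  (ν 1 = 1) ∧
  (∀ (a b : A) (g : G),
    theta ω g (a : G) (b : G) * (τ a g * τ b g / τ (a * b) g)
      = ν a g * ν b g / ν (a * b) g)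


section Conjugation

variable {G : Type*} [Group G]

theorem mul_cjg (g x : G) : x * cjg g x = g * x := by
  simp [cjg, mul_assoc]

theorem cjg_mul (g x y : G) : cjg g x * y = y * cjg g (x * y) := by
  simp [cjg, mul_assoc]

theorem cjg_cjg (g x y : G) : cjg (cjg g x) y = cjg g (x * y) := by
  simp [cjg, mul_assoc]

end Conjugation

def coboundary3 {G M : Type*} [Group G] [CommGroup M] (ω : G → G → G → M) (x y z w : G) : M :=
  ω y z w * ω x (y * z) w * ω x y z / (ω (x * y) z w * ω x y (z * w))

theorem IsNormalized3Cocycle.coboundary3_eq_one {G : Type*} [Group G] {ω : G → G → G → ℂˣ}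
    (hω : IsNormalized3Cocycle ω) (x y z w : G) : coboundary3 ω x y z w = 1 :=
  div_eq_one.mpr (hω.1 x y z w)

theorem theta_mul_theta_div_theta_mul_theta {G : Type*} [Group G] (ω : G → G → G → ℂˣ)
    (g x y z : G) :
    theta ω g x y * theta ω g (x * y) z / (theta ω (cjg g x) y z * theta ω g x (y * z))
      = coboundary3 ω g x y z * coboundary3 ω x y (cjg g (x * y)) z
        / (coboundary3 ω x (cjg g x) y z * coboundary3 ω x y z (cjg g (x * y * z))) := by
  simp only [theta, coboundary3, mul_cjg, cjg_mul, cjg_cjg, mul_assoc]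
  apply Additive.ofMul.injective
  simp only [ofMul_mul, ofMul_div]
  abel

theorem theta_two_cocycle_identity_general {G : Type*} [Group G]
    (ω : G → G → G → ℂˣ) (hω : IsNormalized3Cocycle ω) (g x y z : G) :
    theta ω g x y * theta ω g (x * y) z
      = theta ω (cjg g x) y z * theta ω g x (y * z) := by
  have key := theta_mul_theta_div_theta_mul_theta ω g x y z
  simp only [hω.coboundary3_eq_one, mul_one, div_one] at key
  exact div_eq_one.mp key

theorem theta_two_cocycle_identity {G : Type*} [Group G] [Finite G]
    (ω : G → G → G → ℂˣ) (hω : IsNormalized3Cocycle ω) (g x y z : G) :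
    theta ω g x y * theta ω g (x * y) z
      = theta ω (cjg g x) y z * theta ω g x (y * z) :=
  theta_two_cocycle_identity_general ω hω g x y z
end

section
/- Let G be a finite group, ω a normalized 3-cocycle on G with values in ℂˣ, and g ∈ G. Then for all x, y in the centralizer C(g) = {h ∈ G : g*h = h*g} one has θ_g(x,y) = γ_g(x,y), and the restriction of θ_g to C(g) satisfies the 2-cocycle identity: θ_g(x,y)·θ_g(x*y,z) = θ_g(y,z)·θ_g(x,y*z) for all x, y, z ∈ C(g). -/
lemma cjg_of_comm {G : Type*} [Group G] {g x : G} (h : g * x = x * g) : cjg g x = g := by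
  unfold cjg; rw [mul_assoc, h, ← mul_assoc, inv_mul_cancel, one_mul]

lemma cjg_of_comm' {G : Type*} [Group G] {g x : G} (h : g * x = x * g) : cjg x g = x := by
  unfold cjg; rw [mul_assoc, ← h, ← mul_assoc, inv_mul_cancel, one_mul]

theorem theta_eq_gamma_on_centralizer {G : Type*} [Group G] [Finite G]
    (ω : G → G → G → ℂˣ) (hω : IsNormalized3Cocycle ω) (g : G) :
    (∀ x y : G, g * x = x * g → g * y = y * g → theta ω g x y = gam ω g x y) ∧
    (∀ x y z : G, g * x = x * g → g * y = y * g → g * z = z * g →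
      theta ω g x y * theta ω g (x * y) z
        = theta ω g y z * theta ω g x (y * z)) := by
  obtain ⟨hc, -⟩ := hω
  have comm_mul : ∀ a b : G, g * a = a * g → g * b = b * g → g * (a * b) = (a * b) * g := by
    intro a b ha hb
    rw [← mul_assoc, ha, mul_assoc, hb, ← mul_assoc]
  constructor
  · intro x y hx hy
    have hxy := comm_mul x y hx hy
    rw [theta, gam, cjg_of_comm hxy, cjg_of_comm hx, cjg_of_comm' hx, cjg_of_comm' hy,
      mul_comm (ω g x y)]
  · intro x y z hx hy hz
    have hxy := comm_mul x y hx hy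
    have hyz := comm_mul y z hy hz
    have hxyz := comm_mul (x * y) z hxy hz
    have hxyz' := comm_mul x (y * z) hx hyz
    rw [theta, theta, theta, theta, cjg_of_comm hx, cjg_of_comm hy, cjg_of_comm hxy,
      cjg_of_comm hyz, cjg_of_comm hxyz, cjg_of_comm hxyz']
    have h1 := hc g x y z
    have h2 := hc x g y z
    have h3 := hc x y g z
    have h4 := hc x y z g
    rw [hx] at h1
    rw [hy] at h2
    rw [hz] at h3
    have key : (ω x y z * ω g (x * y) z * ω g x y) * (ω y g z * ω x (y * g) z * ω x y g)
        * ((ω (x * g) y z * ω x g (y * z)) * (ω (x * y) z g * ω x y (z * g)))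
        = (ω (x * g) y z * ω g x (y * z)) * (ω (x * y) g z * ω x y (z * g))
        * ((ω g y z * ω x (y * g) z * ω x g y) * (ω y z g * ω x (y * z) g * ω x y z)) := by
      rw [h1, h3, ← h2, ← h4]
    have ckey := congrArg (Units.val) key
    push_cast at ckey
    rw [Units.ext_iff]
    push_cast
    rw [div_mul_div_comm, div_mul_div_comm, div_eq_div_iff
      (mul_ne_zero (Units.ne_zero _) (Units.ne_zero _))
      (mul_ne_zero (Units.ne_zero _) (Units.ne_zero _))]
    apply mul_right_cancel₀ (b := (ω (x * g) y z : ℂ) * ω x (y * g) z * ω x y (z * g) * ω x y z)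
      (by simp [mul_ne_zero])
    linear_combination ckey
end

section
/- Let G be a finite group and ω a normalized 3-cocycle on G with values in ℂˣ. Then the set Z_ω(G) := {g ∈ Z(G) : γ_g is a 2-coboundary of G} is a subgroup of the center Z(G); that is, it contains the identity and is closed under multiplication and inversion. -/
/-!
For central `g` the conjugations in `γ_g` disappear, so `γ_g(x,y) = ω(x,y,g)·ω(g,x,y)/ω(x,g,y)`.
Six instances of the cocycle identity then give `γ_{gh} = γ_g·γ_h·δc` for central `g, h`, where
`c(t) = ω(g,h,t)·ω(t,g,h)/ω(g,t,h)` is normalized. Hence `g ↦ [γ_g]` is a homomorphism from `Z(G)`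
to the 2-cochains modulo 2-coboundaries, and `Z_ω(G)` is its kernel.
-/

section

variable {G : Type*} [Group G]

lemma cjg_eq_self_of_mem_center {g : G} (hg : g ∈ Subgroup.center G) (x : G) : cjg x g = x := by
  rw [cjg, mul_assoc, Subgroup.mem_center_iff.mp hg x, inv_mul_cancel_left]

lemma gam_eq_of_mem_center (ω : G → G → G → ℂˣ) {g : G} (hg : g ∈ Subgroup.center G) (x y : G) :
    gam ω g x y = ω x y g * ω g x y / ω x g y := by
  rw [gam, cjg_eq_self_of_mem_center hg, cjg_eq_self_of_mem_center hg]

def cocycleDefect (ω : G → G → G → ℂˣ) (x y z w : G) : ℂˣ :=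
  ω y z w * ω x (y * z) w * ω x y z / (ω (x * y) z w * ω x y (z * w))

lemma IsNormalized3Cocycle.cocycleDefect_eq_one {ω : G → G → G → ℂˣ}
    (hω : IsNormalized3Cocycle ω) (x y z w : G) : cocycleDefect ω x y z w = 1 :=
  div_eq_one.mpr (hω.1 x y z w)

def gamMulDefect (ω : G → G → G → ℂˣ) (g h t : G) : ℂˣ := ω g h t * ω t g h / ω g t h

lemma gam_mul_eq_of_mem_center (ω : G → G → G → ℂˣ) {g h : G}
    (hg : g ∈ Subgroup.center G) (hh : h ∈ Subgroup.center G) (x y : G) :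
    gam ω (g * h) x y = gam ω g x y * gam ω h x y *
      (gamMulDefect ω g h x * gamMulDefect ω g h y / gamMulDefect ω g h (x * y)) *
      (cocycleDefect ω x g y h * cocycleDefect ω g x h y /
        (cocycleDefect ω x y g h * cocycleDefect ω x g h y * cocycleDefect ω g x y h *
          cocycleDefect ω g h x y)) := by
  have hgc (t : G) : t * g = g * t := Subgroup.mem_center_iff.mp hg t
  have hhc (t : G) : t * h = h * t := Subgroup.mem_center_iff.mp hh t
  simp only [gam_eq_of_mem_center ω (mul_mem hg hh), gam_eq_of_mem_center ω hg,
    gam_eq_of_mem_center ω hh, gamMulDefect, cocycleDefect, hgc x, hgc y, hhc x, hhc y]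
  rw [Units.ext_iff]
  push_cast
  field_simp

lemma IsNormalized3Cocycle.gam_mul_of_mem_center {ω : G → G → G → ℂˣ}
    (hω : IsNormalized3Cocycle ω) {g h : G} (hg : g ∈ Subgroup.center G)
    (hh : h ∈ Subgroup.center G) (x y : G) :
    gam ω (g * h) x y = gam ω g x y * gam ω h x y *
      (gamMulDefect ω g h x * gamMulDefect ω g h y / gamMulDefect ω g h (x * y)) := by
  simp only [gam_mul_eq_of_mem_center ω hg hh, hω.cocycleDefect_eq_one, mul_one, div_one]

lemma IsNormalized3Cocycle.gam_one {ω : G → G → G → ℂˣ} (hω : IsNormalized3Cocycle ω) :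
    gam ω 1 = 1 := by
  funext x y
  simp [gam, hω.2 x y 1, hω.2 1 (cjg x 1) (cjg y 1), hω.2 x 1 (cjg y 1)]

lemma IsNormalized3Cocycle.gamMulDefect_one {ω : G → G → G → ℂˣ} (hω : IsNormalized3Cocycle ω)
    (g h : G) : gamMulDefect ω g h 1 = 1 := by
  simp [gamMulDefect, hω.2 g h 1, hω.2 1 g h, hω.2 g 1 h]

variable (G) in
def twoCoboundaries : Subgroup (G → G → ℂˣ) where
  carrier := {β | Is2Coboundary β}
  one_mem' := ⟨1, rfl, fun _ _ => by simp⟩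
  mul_mem' := by
    rintro β β' ⟨f, hf1, hf⟩ ⟨f', hf'1, hf'⟩
    refine ⟨f * f', by simp [hf1, hf'1], fun x y => ?_⟩
    simp only [Pi.mul_apply, hf, hf']
    rw [div_mul_div_comm, mul_mul_mul_comm]
  inv_mem' := by
    rintro β ⟨f, hf1, hf⟩
    refine ⟨f⁻¹, by simp [hf1], fun x y => ?_⟩
    simp [hf, div_eq_mul_inv, mul_comm]

lemma mem_twoCoboundaries {β : G → G → ℂˣ} : β ∈ twoCoboundaries G ↔ Is2Coboundary β := Iff.rfl

def gamClass {ω : G → G → G → ℂˣ} (hω : IsNormalized3Cocycle ω) :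
    Subgroup.center G →* (G → G → ℂˣ) ⧸ twoCoboundaries G where
  toFun g := (gam ω g : G → G → ℂˣ)
  map_one' := by
    rw [OneMemClass.coe_one, hω.gam_one, QuotientGroup.mk_one]
  map_mul' g h := by
    have hmul : gam ω (g * h) = gam ω g * gam ω h *
        fun x y => gamMulDefect ω g h x * gamMulDefect ω g h y / gamMulDefect ω g h (x * y) :=
      funext₂ (hω.gam_mul_of_mem_center g.2 h.2)
    rw [← QuotientGroup.mk_mul, eq_comm, QuotientGroup.eq, Subgroup.coe_mul, hmul,
      inv_mul_cancel_left]
    exact ⟨gamMulDefect ω g h, hω.gamMulDefect_one g h, fun _ _ => rfl⟩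

def zOmega {ω : G → G → G → ℂˣ} (hω : IsNormalized3Cocycle ω) : Subgroup G :=
  (gamClass hω).ker.map (Subgroup.center G).subtype

lemma mem_zOmega {ω : G → G → G → ℂˣ} (hω : IsNormalized3Cocycle ω) {g : G} :
    g ∈ zOmega hω ↔ g ∈ Subgroup.center G ∧ Is2Coboundary (gam ω g) := by
  simp [zOmega, MonoidHom.mem_ker, gamClass, QuotientGroup.eq_one_iff, mem_twoCoboundaries,
    and_comm]

end

theorem Zomega_is_subgroup_general {G : Type*} [Group G]
    (ω : G → G → G → ℂˣ) (hω : IsNormalized3Cocycle ω) :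
    let S : Set G := {g | g ∈ Subgroup.center G ∧ Is2Coboundary (gam ω g)}
    (1 : G) ∈ S ∧ (∀ a b : G, a ∈ S → b ∈ S → a * b ∈ S) ∧
      (∀ a : G, a ∈ S → a⁻¹ ∈ S) := by
  intro S
  have hS (g : G) : g ∈ S ↔ g ∈ zOmega hω := (mem_zOmega hω).symm
  simp only [hS]
  exact ⟨one_mem _, fun _ _ => mul_mem, fun _ => inv_mem⟩

theorem Zomega_is_subgroup {G : Type*} [Group G] [Finite G]
    (ω : G → G → G → ℂˣ) (hω : IsNormalized3Cocycle ω) :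
    let S : Set G := {g | g ∈ Subgroup.center G ∧ Is2Coboundary (gam ω g)}
    (1 : G) ∈ S ∧ (∀ a b : G, a ∈ S → b ∈ S → a * b ∈ S) ∧
      (∀ a : G, a ∈ S → a⁻¹ ∈ S) :=
  Zomega_is_subgroup_general ω hω
end

section
/- Let G be a finite group, ω a normalized 3-cocycle on G with values in ℂˣ, g ∈ G, and n ≥ 0 an integer. Then there exists a map f : C(g) → ℂˣ with f(1) = 1 such that θ_{g^n}(x,y) = θ_g(x,y)^n · f(x)·f(y)/f(x*y) for all x, y ∈ C(g) (note that C(g) ⊆ C(g^n), so θ_{g^n} is defined on C(g)). In other words, the restriction to C(g) of the cohomology class of θ_{g^n} equals the n-th power of the class of θ_g. -/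
/-- Key multiplicativity identity: for `a, b` commuting with `x` and `y`,
`θ_a(x,y)·θ_b(x,y)·γ_x(a,b)·γ_y(a,b) = θ_{ab}(x,y)·γ_{xy}(a,b)` (all written out
explicitly, using that conjugation is trivial). -/
lemma key_theta_mul {G : Type*} [Group G] (ω : G → G → G → ℂˣ)
    (hω : IsNormalized3Cocycle ω)
    (a b x y : G) (hxa : a * x = x * a) (hya : a * y = y * a)
    (hxb : b * x = x * b) (hyb : b * y = y * b) :
    (ω a x y * ω x y a / ω x a y) * (ω b x y * ω x y b / ω x b y)
      * (ω a b x * ω x a b / ω a x b) * (ω a b y * ω y a b / ω a y b)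
    = (ω (a*b) x y * ω x y (a*b) / ω x (a*b) y)
      * (ω a b (x*y) * ω (x*y) a b / ω a (x*y) b) := by
  have h1 := hω.1 a b x y
  rw [hxb] at h1
  have h2 := hω.1 x y a b
  rw [← hya] at h2
  have h3 := hω.1 x a b y
  rw [← hxa, hyb] at h3
  have h4 := hω.1 a x y b
  have h5 := hω.1 a x b y
  rw [hyb] at h5
  have h6 := hω.1 x a y b
  rw [← hxa] at h6
  have big : (ω b x y * ω a (x*b) y * ω a b x) * (ω y a b * ω x (a*y) b * ω x y a)
      * (ω a b y * ω x (a*b) y * ω x a b) * (ω x y b * ω a (x*y) b * ω a x y)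
      * (ω (a*x) b y * ω a x (y*b)) * (ω (a*x) y b * ω x a (y*b))
    = (ω (a*b) x y * ω a b (x*y)) * (ω (x*y) a b * ω x y (a*b))
      * (ω (a*x) b y * ω x a (y*b)) * (ω (a*x) y b * ω a x (y*b))
      * (ω x b y * ω a (x*b) y * ω a x b) * (ω a y b * ω x (a*y) b * ω x a y) := by
    rw [h1, h2, h3, h4, ← h5, ← h6]
  have bigc := congrArg (Units.val) big
  push_cast at bigc
  have hK : (((ω a (x*b) y) * (ω x (a*y) b) * (ω (a*x) b y) * (ω a x (y*b))
      * (ω (a*x) y b) * (ω x a (y*b)) : ℂˣ) : ℂ) ≠ 0 := Units.ne_zero _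
  rw [Units.ext_iff]
  push_cast
  field_simp
  apply mul_right_cancel₀ hK
  push_cast
  linear_combination bigc

lemma theta_of_comm {G : Type*} [Group G] (ω : G → G → G → ℂˣ) {g x y : G}
    (hx : g * x = x * g) (hy : g * y = y * g) :
    theta ω g x y = ω g x y * ω x y g / ω x g y := by
  have hxy : g * (x * y) = (x * y) * g := by
    rw [← mul_assoc, hx, mul_assoc, hy, mul_assoc]
  unfold theta
  rw [cjg_of_comm hx, cjg_of_comm hxy]

theorem theta_pow_restriction {G : Type*} [Group G] [Finite G]
    (ω : G → G → G → ℂˣ) (hω : IsNormalized3Cocycle ω) (g : G) (n : ℕ) :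
    ∃ f : ↥(Subgroup.centralizer {g}) → ℂˣ, f 1 = 1 ∧
      ∀ x y : ↥(Subgroup.centralizer {g}),
        theta ω (g ^ n) (x : G) (y : G)
          = theta ω g (x : G) (y : G) ^ n * (f x * f y / f (x * y)) := by
  induction n with
  | zero =>
    refine ⟨fun _ => 1, rfl, fun x y => ?_⟩
    have e2 : cjg (1:G) ((x:G) * y) = 1 := by unfold cjg; group
    have e1 : cjg (1:G) (x:G) = 1 := by unfold cjg; group
    rw [pow_zero, theta, e1, e2, hω.2 1 _ _ (Or.inl rfl),
      hω.2 _ _ 1 (Or.inr (Or.inr rfl)), hω.2 _ 1 _ (Or.inr (Or.inl rfl))]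
    simp
  | succ n ih =>
    obtain ⟨f, hf1, hf⟩ := ih
    refine ⟨fun z => f z * (ω (g^n) g (z:G) * ω (z:G) (g^n) g / ω (g^n) (z:G) g),
      ?_, fun x y => ?_⟩
    · simp only [OneMemClass.coe_one, hf1]
      rw [hω.2 _ _ 1 (Or.inr (Or.inr rfl)), hω.2 1 _ _ (Or.inl rfl),
        hω.2 _ 1 _ (Or.inr (Or.inl rfl))]
      simp
    · have hx : g * (x:G) = x * g := Subgroup.mem_centralizer_iff.mp x.2 g rfl
      have hy : g * (y:G) = y * g := Subgroup.mem_centralizer_iff.mp y.2 g rfl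
      have hxc : Commute g (x:G) := hx
      have hyc : Commute g (y:G) := hy
      have hxn : (g^n) * (x:G) = x * g^n := (hxc.pow_left n).eq
      have hyn : (g^n) * (y:G) = y * g^n := (hyc.pow_left n).eq
      have hxs : (g^n * g) * (x:G) = x * (g^n * g) := ((hxc.pow_left n).mul_left hxc).eq
      have hys : (g^n * g) * (y:G) = y * (g^n * g) := ((hyc.pow_left n).mul_left hyc).eq
      have hK' : theta ω (g^n) (x:G) (y:G) * theta ω g (x:G) (y:G)
            * (ω (g^n) g (x:G) * ω (x:G) (g^n) g / ω (g^n) (x:G) g)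
            * (ω (g^n) g (y:G) * ω (y:G) (g^n) g / ω (g^n) (y:G) g)
          = theta ω (g^n * g) (x:G) (y:G)
            * (ω (g^n) g ((x:G)*(y:G)) * ω ((x:G)*(y:G)) (g^n) g
                / ω (g^n) ((x:G)*(y:G)) g) := by
        rw [theta_of_comm ω hxn hyn, theta_of_comm ω hx hy, theta_of_comm ω hxs hys]
        exact key_theta_mul ω hω (g^n) g (x:G) (y:G) hxn hyn hx hy
      rw [pow_succ] at *
      rw [hf x y] at hK'
      simp only [Subgroup.coe_mul]
      rw [Units.ext_iff] at hK' ⊢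
      push_cast at hK' ⊢
      field_simp at hK' ⊢
      linear_combination -hK'
end

section
/- Let G be a finite group, ω a normalized 3-cocycle on G with values in ℂˣ, and x, y ∈ Z(G). Suppose τ_x, τ_y, τ_{x*y} : G → ℂˣ are maps taking the value 1 at the identity such that γ_x(g,h) = τ_x(g)·τ_x(h)/τ_x(g*h), γ_y(g,h) = τ_y(g)·τ_y(h)/τ_y(g*h), and γ_{x*y}(g,h) = τ_{x*y}(g)·τ_{x*y}(h)/τ_{x*y}(g*h) for all g, h ∈ G. Then the map G → ℂˣ sending g to θ_g(x,y)·τ_x(g)·τ_y(g)/τ_{x*y}(g) is a group homomorphism, i.e., a character of G. -/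
theorem beta_is_character {G : Type*} [Group G] [Finite G]
    (ω : G → G → G → ℂˣ) (hω : IsNormalized3Cocycle ω)
    (x y : G) (hx : x ∈ Subgroup.center G) (hy : y ∈ Subgroup.center G)
    (τx τy τxy : G → ℂˣ) (hτx1 : τx 1 = 1) (hτy1 : τy 1 = 1) (hτxy1 : τxy 1 = 1)
    (hτx : ∀ g h : G, gam ω x g h = τx g * τx h / τx (g * h))
    (hτy : ∀ g h : G, gam ω y g h = τy g * τy h / τy (g * h))
    (hτxy : ∀ g h : G, gam ω (x * y) g h = τxy g * τxy h / τxy (g * h)) :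
    ∀ g h : G,
      theta ω (g * h) x y * τx (g * h) * τy (g * h) / τxy (g * h)
        = (theta ω g x y * τx g * τy g / τxy g)
            * (theta ω h x y * τx h * τy h / τxy h) := by
  intro g h
  obtain ⟨hpent, -⟩ := hω
  have cx : ∀ a : G, a * x = x * a := fun a => Subgroup.mem_center_iff.mp hx a
  have cy : ∀ a : G, a * y = y * a := fun a => Subgroup.mem_center_iff.mp hy a
  have hxyc : x * y ∈ Subgroup.center G := mul_mem hx hy
  have cj : ∀ z ∈ Subgroup.center G, ∀ a : G, cjg a z = a := by
    intro z hz a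
    rw [cjg, mul_assoc, Subgroup.mem_center_iff.mp hz a, ← mul_assoc,
      inv_mul_cancel, one_mul]
  have cjx : ∀ a : G, cjg a x = a := cj x hx
  have cjy : ∀ a : G, cjg a y = a := cj y hy
  have cjxy : ∀ a : G, cjg a (x * y) = a := cj (x * y) hxyc
  have Q1 : ω h x y * ω g (h*x) y * ω g h x
      = ω (g*h) x y * ω g h (x*y) := by
    have := hpent g h x y
    exact this
  have Q2 : ω x h y * ω g (h*x) y * ω g x h
      = ω (g*x) h y * ω g x (h*y) := by
    have := hpent g x h y
    rw [← cx h] at this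
    exact this
  have Q3 : ω x y h * ω g (x*y) h * ω g x y
      = ω (g*x) y h * ω g x (h*y) := by
    have := hpent g x y h
    rw [← cy h] at this
    exact this
  have Q4 : ω g h y * ω x (g*h) y * ω x g h
      = ω (g*x) h y * ω x g (h*y) := by
    have := hpent x g h y
    rw [← cx g] at this
    exact this
  have Q5 : ω g y h * ω x (g*y) h * ω x g y
      = ω (g*x) y h * ω x g (h*y) := by
    have := hpent x g y h
    rw [← cx g, ← cy h] at this
    exact this
  have Q6 : ω y g h * ω x (g*y) h * ω x y g
      = ω (x*y) g h * ω x y (g*h) := by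
    have := hpent x y g h
    rw [← cy g] at this
    exact this
  have E7u : ω g h x * ω x g h * τx (g * h) = τx g * τx h * ω g x h := by
    have h0 := hτx g h
    simp only [gam, cjx] at h0
    exact div_eq_div_iff_mul_eq_mul.mp h0
  have E8u : ω g h y * ω y g h * τy (g * h) = τy g * τy h * ω g y h := by
    have h0 := hτy g h
    simp only [gam, cjy] at h0
    exact div_eq_div_iff_mul_eq_mul.mp h0
  have E9u : τxy g * τxy h * ω g (x*y) h = ω g h (x*y) * ω (x*y) g h * τxy (g * h) := by
    have h0 := hτxy g h
    simp only [gam, cjxy] at h0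
    exact (div_eq_div_iff_mul_eq_mul.mp h0).symm
  have E1 : (ω (g*h) x y : ℂ) * (ω g h (x*y) : ℂ) = (ω h x y : ℂ) * (ω g (h*x) y : ℂ) * (ω g h x : ℂ) := by
    exact_mod_cast congrArg Units.val (Q1.symm)
  have E2 : (ω x h y : ℂ) * (ω g (h*x) y : ℂ) * (ω g x h : ℂ) = (ω (g*x) h y : ℂ) * (ω g x (h*y) : ℂ) := by
    exact_mod_cast congrArg Units.val (Q2)
  have E3 : (ω (g*x) y h : ℂ) * (ω g x (h*y) : ℂ) = (ω x y h : ℂ) * (ω g (x*y) h : ℂ) * (ω g x y : ℂ) := by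
    exact_mod_cast congrArg Units.val (Q3.symm)
  have E4 : (ω (g*x) h y : ℂ) * (ω x g (h*y) : ℂ) = (ω g h y : ℂ) * (ω x (g*h) y : ℂ) * (ω x g h : ℂ) := by
    exact_mod_cast congrArg Units.val (Q4.symm)
  have E5 : (ω g y h : ℂ) * (ω x (g*y) h : ℂ) * (ω x g y : ℂ) = (ω (g*x) y h : ℂ) * (ω x g (h*y) : ℂ) := by
    exact_mod_cast congrArg Units.val (Q5)
  have E6 : (ω (x*y) g h : ℂ) * (ω x y (g*h) : ℂ) = (ω y g h : ℂ) * (ω x (g*y) h : ℂ) * (ω x y g : ℂ) := by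
    exact_mod_cast congrArg Units.val (Q6.symm)
  have E7 : (ω g h x : ℂ) * (ω x g h : ℂ) * (τx (g*h) : ℂ) = (τx g : ℂ) * (τx h : ℂ) * (ω g x h : ℂ) := by
    exact_mod_cast congrArg Units.val (E7u)
  have E8 : (ω g h y : ℂ) * (ω y g h : ℂ) * (τy (g*h) : ℂ) = (τy g : ℂ) * (τy h : ℂ) * (ω g y h : ℂ) := by
    exact_mod_cast congrArg Units.val (E8u)
  have E9 : (τxy g : ℂ) * (τxy h : ℂ) * (ω g (x*y) h : ℂ) = (ω g h (x*y) : ℂ) * (ω (x*y) g h : ℂ) * (τxy (g*h) : ℂ) := by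
    exact_mod_cast congrArg Units.val (E9u)
  have hne : (((ω h x y : ℂ) * (ω g (h*x) y : ℂ) * (ω g h x : ℂ)) * ((ω (g*x) h y : ℂ) * (ω g x (h*y) : ℂ)) * ((ω x y h : ℂ) * (ω g (x*y) h : ℂ) * (ω g x y : ℂ)) * ((ω g h y : ℂ) * (ω x (g*h) y : ℂ) * (ω x g h : ℂ)) * ((ω (g*x) y h : ℂ) * (ω x g (h*y) : ℂ)) * ((ω y g h : ℂ) * (ω x (g*y) h : ℂ) * (ω x y g : ℂ)) * ((τx g : ℂ) * (τx h : ℂ) * (ω g x h : ℂ)) * ((τy g : ℂ) * (τy h : ℂ) * (ω g y h : ℂ)) * ((ω g h (x*y) : ℂ) * (ω (x*y) g h : ℂ) * (τxy (g*h) : ℂ))) ≠ 0 := by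
    apply_rules [mul_ne_zero, Units.ne_zero]
  have MAIN : (ω (g*h) x y : ℂ) * (ω x y (g*h) : ℂ) * (τx (g*h) : ℂ) * (τy (g*h) : ℂ) * (ω x g y : ℂ) * (ω x h y : ℂ) * (τxy g : ℂ) * (τxy h : ℂ) = (ω g x y : ℂ) * (ω x y g : ℂ) * (τx g : ℂ) * (τy g : ℂ) * (ω h x y : ℂ) * (ω x y h : ℂ) * (τx h : ℂ) * (τy h : ℂ) * (ω x (g*h) y : ℂ) * (τxy (g*h) : ℂ) := by
    refine mul_right_cancel₀ hne ?_
    calc ((ω (g*h) x y : ℂ) * (ω x y (g*h) : ℂ) * (τx (g*h) : ℂ) * (τy (g*h) : ℂ) * (ω x g y : ℂ) * (ω x h y : ℂ) * (τxy g : ℂ) * (τxy h : ℂ)) * (((ω h x y : ℂ) * (ω g (h*x) y : ℂ) * (ω g h x : ℂ)) * ((ω (g*x) h y : ℂ) * (ω g x (h*y) : ℂ)) * ((ω x y h : ℂ) * (ω g (x*y) h : ℂ) * (ω g x y : ℂ)) * ((ω g h y : ℂ) * (ω x (g*h) y : ℂ) * (ω x g h : ℂ)) * ((ω (g*x) y h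 : ℂ) * (ω x g (h*y) : ℂ)) * ((ω y g h : ℂ) * (ω x (g*y) h : ℂ) * (ω x y g : ℂ)) * ((τx g : ℂ) * (τx h : ℂ) * (ω g x h : ℂ)) * ((τy g : ℂ) * (τy h : ℂ) * (ω g y h : ℂ)) * ((ω g h (x*y) : ℂ) * (ω (x*y) g h : ℂ) * (τxy (g*h) : ℂ)))
        = ((ω g x y : ℂ) * (ω x y g : ℂ) * (τx g : ℂ) * (τy g : ℂ) * (ω h x y : ℂ) * (ω x y h : ℂ) * (τx h : ℂ) * (τy h : ℂ) * (ω x (g*h) y : ℂ) * (τxy (g*h) : ℂ)) * (((ω (g*h) x y : ℂ) * (ω g h (x*y) : ℂ)) * ((ω x h y : ℂ) * (ω g (h*x) y : ℂ) * (ω g x h : ℂ)) * ((ω (g*x) y h : ℂ) * (ω g x (h*y) : ℂ)) * ((ω (g*x) h y : ℂ) * (ω x g (h*y) : ℂ)) * ((ω g y h : ℂ) * (ω x (g*y) h : ℂ) * (ω x g y : ℂ)) * ((ω (x*y) g h : ℂ) * (ω x y (g*h) : ℂ)) * ((ω g h x : ℂ) * (ω x g h : ℂ) * (τx (g*h) :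 ℂ)) * ((ω g h y : ℂ) * (ω y g h : ℂ) * (τy (g*h) : ℂ)) * ((τxy g : ℂ) * (τxy h : ℂ) * (ω g (x*y) h : ℂ))) := by ring
      _ = ((ω g x y : ℂ) * (ω x y g : ℂ) * (τx g : ℂ) * (τy g : ℂ) * (ω h x y : ℂ) * (ω x y h : ℂ) * (τx h : ℂ) * (τy h : ℂ) * (ω x (g*h) y : ℂ) * (τxy (g*h) : ℂ)) * (((ω h x y : ℂ) * (ω g (h*x) y : ℂ) * (ω g h x : ℂ)) * ((ω (g*x) h y : ℂ) * (ω g x (h*y) : ℂ)) * ((ω x y h : ℂ) * (ω g (x*y) h : ℂ) * (ω g x y : ℂ)) * ((ω g h y : ℂ) * (ω x (g*h) y : ℂ) * (ω x g h : ℂ)) * ((ω (g*x) y h : ℂ) * (ω x g (h*y) : ℂ)) * ((ω y g h : ℂ) * (ω x (g*y) h : ℂ) * (ω x y g : ℂ)) * ((τx g : ℂ) * (τx h : ℂ) * (ω g x h : ℂ)) * ((τy g : ℂ) * (τy h : ℂ) * (ω g y h : ℂ)) * ((ω g h (x*y) : ℂ) * (ω (x*y) g h : ℂ) * (τxy (g*h)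 : ℂ))) := by
          rw [E1, E2, E3, E4, E5, E6, E7, E8, E9]
  rw [Units.ext_iff]
  simp only [theta, cjx, cjxy]
  push_cast
  field_simp
  linear_combination MAIN
end

section
/- Let G be a finite perfect group (its commutator subgroup equals G) and let E be a representation group of G, i.e., there is a surjective group homomorphism π : E → G with E finite and ker π ⊆ Z(E) ∩ [E,E] (a stem extension), such that |E| ≥ |F| for every finite group F admitting a surjective homomorphism π' : F → G with ker π' ⊆ Z(F) ∩ [F,F]. Then H²(E, ℂˣ) = 1: every 2-cocycle β : E × E → ℂˣ is a 2-coboundary of E. -/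
/-!
Averaging a 2-cocycle `β` of the finite group `E` over one variable shows that `β ^ |E|` is a
coboundary; extracting `|E|`-th roots in `ℂˣ` makes `β` cohomologous to a cocycle with values in
the `|E|`-th roots of unity. That cocycle defines a finite central extension of `E`, and it is a
coboundary as soon as the extension splits. Every finite central extension `p : F ↠ E` splits:
`E` is perfect, hence `p` maps `[F, F]` onto `E`, the group `[F, F]` is perfect, and by the three
subgroups lemma it is a stem extension of `G`. Maximality of `|E|` then makes `p` injective on
`[F, F]`, and the inverse of this isomorphism is a section.
-/

open Subgroup Function
open scoped commutatorElement

section Perfect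

variable {G E F : Type*} [Group G] [Group E] [Group F]

theorem map_commutator_eq_top_of_surjective {p : F →* E} (hp : Surjective p)
    (hE : commutator E = ⊤) : (commutator F).map p = ⊤ :=
  (map_derivedSeries_eq hp 1).trans hE

theorem commutator_eq_top_of_ker_le_commutator {π : E →* G} (hπ : Surjective π)
    (hker : π.ker ≤ commutator E) (hG : commutator G = ⊤) : commutator E = ⊤ := by
  rw [← sup_eq_left.mpr hker, ← comap_map_eq, map_commutator_eq_top_of_surjective hπ hG,
    comap_top]

theorem commutatorElement_eq_of_ker_le_center {p : F →* E} (hp : p.ker ≤ center F)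
    {a a' b b' : F} (ha : p a = p a') (hb : p b = p b') : ⁅a, b⁆ = ⁅a', b'⁆ := by
  have hleft : ∀ {a a' b : F}, p a = p a' → ⁅a, b⁆ = ⁅a', b⁆ := by
    intro a a' b h
    have hz : a'⁻¹ * a ∈ center F := hp (by rw [MonoidHom.mem_ker, map_mul, map_inv, h,
      inv_mul_cancel])
    have hzb : ⁅a'⁻¹ * a, b⁆ = 1 :=
      commutatorElement_eq_one_iff_mul_comm.2 (mem_center_iff.1 hz b).symm
    calc ⁅a, b⁆ = ⁅a' * (a'⁻¹ * a), b⁆ := by rw [mul_inv_cancel_left]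
      _ = ⁅a', b⁆ := by rw [commutatorElement_mul_left_eq_conj_mul, hzb, mul_one,
        mul_inv_cancel, one_mul]
  rw [hleft ha, ← commutatorElement_inv, hleft hb, commutatorElement_inv]

theorem commutator_commutator_eq_top {p : F →* E} (hp : Surjective p) (hker : p.ker ≤ center F)
    (hE : commutator E = ⊤) : commutator (commutator F) = ⊤ := by
  suffices h : ⁅commutator F, commutator F⁆ = commutator F by
    apply map_injective (commutator F).subtype_injective
    rw [map_subtype_commutator, h, ← MonoidHom.range_eq_map, range_subtype]
  refine le_antisymm (commutator_le_self _) ?_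
  have hlift : ∀ a : F, ∃ a' ∈ commutator F, p a' = p a := fun a =>
    mem_map.1 ((map_commutator_eq_top_of_surjective hp hE).symm ▸ mem_top (p a))
  refine (commutator_def F).trans_le (commutator_le.2 fun a _ b _ => ?_)
  obtain ⟨a', ha', hpa⟩ := hlift a
  obtain ⟨b', hb', hpb⟩ := hlift b
  rw [commutatorElement_eq_of_ker_le_center hker hpa.symm hpb.symm]
  exact commutator_mem_commutator ha' hb'

theorem le_center_of_commutator_le_center (hF : commutator F = ⊤) {X : Subgroup F}
    (hX : ⁅X, ⊤⁆ ≤ center F) : X ≤ center F := by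
  have hcen : ∀ K : Subgroup F, ⁅K, ⊤⁆ = ⊥ ↔ K ≤ center F := fun K => by
    rw [commutator_eq_bot_iff_le_centralizer, coe_top, centralizer_univ]
  have h := commutator_commutator_eq_bot_of_rotate
    ((hcen _).2 (commutator_comm X ⊤ ▸ hX)) ((hcen _).2 hX)
  rwa [← commutator_def, hF, commutator_comm, hcen] at h

theorem ker_comp_le_center_of_commutator_eq_top (hF : commutator F = ⊤) {f : F →* E}
    (hf : f.ker ≤ center F) {g : E →* G} (hg : g.ker ≤ center E) :
    (g.comp f).ker ≤ center F := by
  refine le_center_of_commutator_le_center hF (le_trans ?_ hf)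
  rw [commutator_le]
  intro x hx y _
  rw [MonoidHom.mem_ker, map_commutatorElement, commutatorElement_eq_one_iff_mul_comm]
  exact (mem_center_iff.1 (hg hx) (f y)).symm

theorem ker_comp_subtype_le_center {p : F →* E} (hp : p.ker ≤ center F) (K : Subgroup F) :
    (p.comp K.subtype).ker ≤ center K :=
  fun _ hx => mem_center_iff.2 fun g => Subtype.ext (mem_center_iff.1 (hp hx) g)

end Perfect

def CentralExtensionsSplit (E : Type) [Group E] : Prop :=
  ∀ (F : Type) [Group F] [Finite F] (p : F →* E), Surjective p → p.ker ≤ center F →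
    ∃ s : E →* F, ∀ x, p (s x) = x

theorem centralExtensionsSplit_of_maximal_stem {G E : Type} [Group G] [Group E] [Finite E]
    (hG : commutator G = ⊤) (π : E →* G) (hπ : Surjective π)
    (hstem : π.ker ≤ center E ⊓ commutator E)
    (hmax : ∀ (F : Type) [Group F] [Finite F] (π' : F →* G),
      Surjective π' → π'.ker ≤ center F ⊓ commutator F → Nat.card F ≤ Nat.card E) :
    CentralExtensionsSplit E := by
  intro F _ _ p hp hker
  have hE := commutator_eq_top_of_ker_le_commutator hπ (hstem.trans inf_le_right) hG
  set K := commutator F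
  let q : K →* E := p.comp K.subtype
  have hq : Surjective q := fun e => by
    obtain ⟨x, hx, rfl⟩ := mem_map.1 ((map_commutator_eq_top_of_surjective hp hE).symm ▸ mem_top e)
    exact ⟨⟨x, hx⟩, rfl⟩
  have hK := commutator_commutator_eq_top hp hker hE
  have hstemK : (π.comp q).ker ≤ center K ⊓ commutator K :=
    le_inf (ker_comp_le_center_of_commutator_eq_top hK (ker_comp_subtype_le_center hker K)
      (hstem.trans inf_le_left)) (hK ▸ le_top)
  obtain ⟨hinj, -⟩ := hq.bijective_of_nat_card_le (hmax K (π.comp q) (hπ.comp hq) hstemK)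
  let e : K ≃* E := MulEquiv.ofBijective q ⟨hinj, hq⟩
  exact ⟨K.subtype.comp e.symm.toMonoidHom, e.apply_symm_apply⟩

structure TwoCocycle (E M : Type*) [Group E] [CommGroup M] where
  toFun : E → E → M
  map_one_left : ∀ x, toFun 1 x = 1
  map_one_right : ∀ x, toFun x 1 = 1
  cocycle : ∀ x y z, toFun x y * toFun (x * y) z = toFun y z * toFun x (y * z)

namespace TwoCocycle

variable {E M : Type*} [Group E] [CommGroup M]

def IsCoboundary (c : TwoCocycle E M) : Prop :=
  ∃ f : E → M, f 1 = 1 ∧ ∀ x y, c.toFun x y = f x * f y / f (x * y)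

def coboundary (g : E → M) (hg : g 1 = 1) : TwoCocycle E M where
  toFun x y := g x * g y / g (x * y)
  map_one_left x := by rw [hg, one_mul, one_mul, div_self']
  map_one_right x := by rw [hg, mul_one, mul_one, div_self']
  cocycle x y z := by
    rw [mul_assoc x y z]
    apply Additive.ofMul.injective
    simp only [ofMul_mul, ofMul_div]
    abel

instance : Div (TwoCocycle E M) where
  div c d :=
    { toFun := fun x y => c.toFun x y / d.toFun x y
      map_one_left := fun x => by rw [c.map_one_left, d.map_one_left, div_one]
      map_one_right := fun x => by rw [c.map_one_right, d.map_one_right, div_one]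
      cocycle := fun x y z => by rw [div_mul_div_comm, div_mul_div_comm, c.cocycle, d.cocycle] }

theorem IsCoboundary.of_div_coboundary {c : TwoCocycle E M} {g : E → M} {hg : g 1 = 1}
    (h : (c / coboundary g hg).IsCoboundary) : c.IsCoboundary := by
  obtain ⟨f, hf1, hf⟩ := h
  refine ⟨f * g, by rw [Pi.mul_apply, hf1, hg, one_mul], fun x y => ?_⟩
  have hxy := hf x y
  change c.toFun x y / (g x * g y / g (x * y)) = _ at hxy
  rw [div_eq_iff_eq_mul] at hxy
  rw [hxy]
  apply Additive.ofMul.injective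
  simp only [ofMul_mul, ofMul_div, Pi.mul_apply]
  abel

def codRestrict (c : TwoCocycle E M) (S : Subgroup M) (hS : ∀ x y, c.toFun x y ∈ S) :
    TwoCocycle E S where
  toFun x y := ⟨c.toFun x y, hS x y⟩
  map_one_left x := Subtype.ext (c.map_one_left x)
  map_one_right x := Subtype.ext (c.map_one_right x)
  cocycle x y z := Subtype.ext (c.cocycle x y z)

theorem IsCoboundary.of_codRestrict {c : TwoCocycle E M} {S : Subgroup M}
    {hS : ∀ x y, c.toFun x y ∈ S} (h : (c.codRestrict S hS).IsCoboundary) : c.IsCoboundary := by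
  obtain ⟨f, hf1, hf⟩ := h
  exact ⟨fun x => f x, congrArg Subtype.val hf1, fun x y => congrArg Subtype.val (hf x y)⟩

theorem pow_card_eq [Fintype E] (c : TwoCocycle E M) (x y : E) :
    c.toFun x y ^ Fintype.card E
      = (∏ z, c.toFun x z) * (∏ z, c.toFun y z) / ∏ z, c.toFun (x * y) z := by
  rw [eq_div_iff_mul_eq']
  calc c.toFun x y ^ Fintype.card E * ∏ z, c.toFun (x * y) z
      = ∏ z, c.toFun x y * c.toFun (x * y) z := by
        rw [Finset.prod_mul_distrib, Finset.prod_const, Finset.card_univ]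
    _ = ∏ z, c.toFun y z * c.toFun x (y * z) := Finset.prod_congr rfl fun z _ => c.cocycle x y z
    _ = (∏ z, c.toFun x z) * ∏ z, c.toFun y z := by
        rw [Finset.prod_mul_distrib, Fintype.prod_equiv (Equiv.mulLeft y) (fun z => c.toFun x (y * z))
          (c.toFun x) fun _ => rfl, mul_comm]

theorem exists_pow_card_div_coboundary_eq_one [Finite E] (c : TwoCocycle E M)
    (hM : ∀ m : M, ∃ r : M, r ^ Nat.card E = m) :
    ∃ (g : E → M) (hg : g 1 = 1), ∀ x y, (c / coboundary g hg).toFun x y ^ Nat.card E = 1 := by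
  have := Fintype.ofFinite E
  set f : E → M := fun x => ∏ z, c.toFun x z
  have hf1 : f 1 = 1 := Finset.prod_eq_one fun z _ => c.map_one_left z
  choose r hr using hM
  refine ⟨fun x => r (f x) / r (f 1), div_self' _, fun x y => ?_⟩
  have hg : ∀ x, (r (f x) / r (f 1)) ^ Nat.card E = f x := fun x => by
    rw [div_pow, hr, hr, hf1, div_one]
  change (c.toFun x y / (_ * _ / _)) ^ _ = 1
  rw [div_pow, div_pow, mul_pow, hg, hg, hg, Nat.card_eq_fintype_card, pow_card_eq, div_self']

theorem toFun_inv_self (c : TwoCocycle E M) (x : E) : c.toFun x⁻¹ x = c.toFun x x⁻¹ := by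
  simpa [c.map_one_left, c.map_one_right] using (c.cocycle x x⁻¹ x).symm

@[ext]
structure Extension (c : TwoCocycle E M) where
  base : E
  fiber : M

variable {c : TwoCocycle E M}

instance : Group c.Extension where
  mul p q := ⟨p.base * q.base, p.fiber * q.fiber * c.toFun p.base q.base⟩
  one := ⟨1, 1⟩
  inv p := ⟨p.base⁻¹, (p.fiber * c.toFun p.base p.base⁻¹)⁻¹⟩
  mul_assoc p q r := by
    refine Extension.ext (mul_assoc _ _ _) ?_
    change p.fiber * q.fiber * c.toFun p.base q.base * r.fiber
        * c.toFun (p.base * q.base) r.base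
      = p.fiber * (q.fiber * r.fiber * c.toFun q.base r.base) * c.toFun p.base (q.base * r.base)
    calc _ = p.fiber * q.fiber * r.fiber
          * (c.toFun p.base q.base * c.toFun (p.base * q.base) r.base) := by ac_rfl
      _ = _ := by rw [c.cocycle]; ac_rfl
  one_mul p := by
    refine Extension.ext (one_mul _) ?_
    change 1 * p.fiber * c.toFun 1 p.base = p.fiber
    rw [c.map_one_left, one_mul, mul_one]
  mul_one p := by
    refine Extension.ext (mul_one _) ?_
    change p.fiber * 1 * c.toFun p.base 1 = p.fiber
    rw [c.map_one_right, mul_one, mul_one]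
  inv_mul_cancel p := by
    refine Extension.ext (inv_mul_cancel _) ?_
    change (p.fiber * c.toFun p.base p.base⁻¹)⁻¹ * p.fiber * c.toFun p.base⁻¹ p.base = 1
    rw [toFun_inv_self, mul_assoc, inv_mul_cancel]

instance [Finite E] [Finite M] : Finite c.Extension :=
  Finite.of_equiv (E × M) ⟨fun p => ⟨p.1, p.2⟩, fun p => (p.base, p.fiber), fun _ => rfl,
    fun _ => rfl⟩

variable (c) in
def proj : c.Extension →* E where
  toFun := Extension.base
  map_one' := rfl
  map_mul' _ _ := rfl

theorem proj_surjective : Surjective c.proj := fun x => ⟨⟨x, 1⟩, rfl⟩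

theorem ker_proj_le_center : c.proj.ker ≤ center c.Extension := by
  intro z (hz : z.base = 1)
  refine mem_center_iff.2 fun p => Extension.ext ?_ ?_
  · change p.base * z.base = z.base * p.base
    rw [hz, mul_one, one_mul]
  · change p.fiber * z.fiber * c.toFun p.base z.base = z.fiber * p.fiber * c.toFun z.base p.base
    rw [hz, c.map_one_left, c.map_one_right, mul_comm p.fiber]

theorem isCoboundary_of_section (s : E →* c.Extension) (hs : ∀ x, c.proj (s x) = x) :
    c.IsCoboundary := by
  refine ⟨fun x => (s x).fiber⁻¹, by simp only [map_one]; exact inv_one, fun x y => ?_⟩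
  have h : (s (x * y)).fiber = (s x).fiber * (s y).fiber * c.toFun (s x).base (s y).base :=
    congrArg Extension.fiber (map_mul s x y)
  have hb : ∀ x, (s x).base = x := hs
  simp only [h, hb]
  apply Additive.ofMul.injective
  simp only [ofMul_mul, ofMul_div, ofMul_inv]
  abel

theorem isCoboundary_of_centralExtensionsSplit {E M : Type} [Group E] [Finite E] [CommGroup M]
    [Finite M] (hE : CentralExtensionsSplit E) (c : TwoCocycle E M) : c.IsCoboundary := by
  obtain ⟨s, hs⟩ := hE _ c.proj proj_surjective ker_proj_le_center
  exact isCoboundary_of_section s hs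

end TwoCocycle

def Is2Cocycle.toTwoCocycle {E : Type*} [Group E] {β : E → E → ℂˣ} (hβ : Is2Cocycle β) :
    TwoCocycle E ℂˣ where
  toFun := β
  map_one_left x := (hβ.1 x).2
  map_one_right x := (hβ.1 x).1
  cocycle := hβ.2

theorem IsAlgClosed.exists_units_pow_eq {k : Type*} [Field k] [IsAlgClosed k] (u : kˣ) {n : ℕ}
    (hn : n ≠ 0) : ∃ v : kˣ, v ^ n = u := by
  obtain ⟨z, hz⟩ := exists_pow_nat_eq (u : k) (Nat.pos_of_ne_zero hn)
  have hz0 : z ≠ 0 := by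
    rintro rfl
    exact u.ne_zero (by rw [← hz, zero_pow hn])
  exact ⟨Units.mk0 z hz0, Units.ext (by simpa using hz)⟩

theorem schur_multiplier_of_representation_group_trivial_general
    {G E : Type} [Group G] [Group E] [Finite E]
    (hG : commutator G = ⊤)
    (π : E →* G) (hsurj : Function.Surjective π)
    (hstem : π.ker ≤ Subgroup.center E ⊓ commutator E)
    (hmax : ∀ (F : Type) [Group F] [Finite F] (π' : F →* G),
      Function.Surjective π' → π'.ker ≤ Subgroup.center F ⊓ commutator F →
      Nat.card F ≤ Nat.card E) :
    ∀ β : E → E → ℂˣ, Is2Cocycle β → Is2Coboundary β := by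
  intro β hβ
  have hsplit := centralExtensionsSplit_of_maximal_stem hG π hsurj hstem hmax
  have : NeZero (Nat.card E) := ⟨Nat.card_pos.ne'⟩
  obtain ⟨g, hg, htors⟩ := hβ.toTwoCocycle.exists_pow_card_div_coboundary_eq_one
    fun u => IsAlgClosed.exists_units_pow_eq u (NeZero.ne _)
  let c := (hβ.toTwoCocycle / TwoCocycle.coboundary g hg).codRestrict
    (rootsOfUnity (Nat.card E) ℂ) fun x y => (mem_rootsOfUnity _ _).2 (htors x y)
  exact (c.isCoboundary_of_centralExtensionsSplit hsplit).of_codRestrict.of_div_coboundary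

theorem schur_multiplier_of_representation_group_trivial
    {G E : Type} [Group G] [Finite G] [Group E] [Finite E]
    (hG : commutator G = ⊤)
    (π : E →* G) (hsurj : Function.Surjective π)
    (hstem : π.ker ≤ Subgroup.center E ⊓ commutator E)
    (hmax : ∀ (F : Type) [Group F] [Finite F] (π' : F →* G),
      Function.Surjective π' → π'.ker ≤ Subgroup.center F ⊓ commutator F →
      Nat.card F ≤ Nat.card E) :
    ∀ β : E → E → ℂˣ, Is2Cocycle β → Is2Coboundary β :=
  schur_multiplier_of_representation_group_trivial_general hG π hsurj hstem hmax
end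

section
/- Let G be a finite group, ω a normalized 3-cocycle on G with values in ℂˣ, A ⊆ Z(G) a subgroup, and let (τ, ν) and (τ', ν') be two ω-admissible pairs for A. Then there exists a map f assigning to each a ∈ A a group homomorphism f(a) : G → ℂˣ, with f(a*b) = f(a)·f(b) for all a, b ∈ A, such that τ'_a(x)/ν'(a)(x) = (τ_a(x)/ν(a)(x))·f(a)(x) for all a ∈ A and x ∈ G. -/
/-!
Since `ν(a)` is a homomorphism, `x ↦ τ_a(x) / ν(a)(x)` has the same coboundary `θ_a` as `τ_a`, and
likewise for the primed pair; so `f(a) := (τ'_a / ν'(a)) / (τ_a / ν(a))` is a homomorphism on `G`.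
For fixed `g`, the admissibility condition says that `a ↦ τ_a(g) / ν(a)(g)` has coboundary `θ_g⁻¹`
on `A`, again for both pairs, so `f` is multiplicative in `a` as well.
-/

def mulCoboundary {H M : Type*} [Mul H] [CommGroup M] (φ : H → M) (x y : H) : M :=
  φ x * φ y / φ (x * y)

section mulCoboundary

variable {H M : Type*} [CommGroup M]

theorem mulCoboundary_div [Mul H] (φ ψ : H → M) (x y : H) :
    mulCoboundary (fun z => φ z / ψ z) x y = mulCoboundary φ x y / mulCoboundary ψ x y := by
  simp only [mulCoboundary, div_mul_div_comm, div_div_div_comm]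

theorem mulCoboundary_div_monoidHom [MulOneClass H] (φ : H → M) (χ : H →* M) :
    mulCoboundary (fun z => φ z / χ z) = mulCoboundary φ := by
  ext x y
  rw [mulCoboundary_div]
  simp only [mulCoboundary, map_mul, div_self', div_one]

theorem div_mul_div_of_mulCoboundary_eq [Mul H] {φ ψ : H → M}
    (h : mulCoboundary φ = mulCoboundary ψ) (x y : H) :
    ψ (x * y) / φ (x * y) = ψ x / φ x * (ψ y / φ y) := by
  have hxy := congrFun (congrFun h x) y
  simp only [mulCoboundary] at hxy
  rw [div_eq_div_iff_mul_eq_mul] at hxy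
  rw [div_mul_div_comm, div_eq_div_iff_mul_eq_mul]
  rwa [mul_comm]

end mulCoboundary

def ratioHom {H M : Type*} [MulOneClass H] [CommGroup M] {φ ψ : H → M}
    (h : mulCoboundary φ = mulCoboundary ψ) : H →* M :=
  MonoidHom.mk' (fun x => ψ x / φ x) (div_mul_div_of_mulCoboundary_eq h)

namespace IsAdmissiblePair

variable {G : Type*} [Group G] {ω : G → G → G → ℂˣ} {A : Subgroup G} {τ : A → G → ℂˣ}
  {ν : A → (G →* ℂˣ)}

theorem mulCoboundary_tau (h : IsAdmissiblePair ω A τ ν) (a : A) :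
    mulCoboundary (τ a) = theta ω a := by
  funext x y
  exact (h.2.2.1 a x y).symm

theorem mulCoboundary_tau_div_nu_apply (h : IsAdmissiblePair ω A τ ν) (g : G) :
    mulCoboundary (fun a => τ a g / ν a g) = fun a b : A => (theta ω g a b)⁻¹ := by
  funext a b
  rw [mulCoboundary_div]
  simp only [mulCoboundary]
  rw [← h.2.2.2.2 a b g]
  exact div_mul_cancel_right _ _

end IsAdmissiblePair

theorem admissible_pairs_differ_by_character_general {G : Type*} [Group G]
    (ω : G → G → G → ℂˣ)
    (A : Subgroup G)
    (τ τ' : ↥A → G → ℂˣ) (ν ν' : ↥A → (G →* ℂˣ))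
    (hpair : IsAdmissiblePair ω A τ ν) (hpair' : IsAdmissiblePair ω A τ' ν') :
    ∃ f : ↥A → (G →* ℂˣ),
      (∀ a b : ↥A, f (a * b) = f a * f b) ∧
      ∀ (a : ↥A) (x : G),
        τ' a x / ν' a x = (τ a x / ν a x) * f a x := by
  have hcobG (a : A) :
      mulCoboundary (fun x => τ a x / ν a x) = mulCoboundary (fun x => τ' a x / ν' a x) := by
    rw [mulCoboundary_div_monoidHom, mulCoboundary_div_monoidHom, hpair.mulCoboundary_tau,
      hpair'.mulCoboundary_tau]
  have hcobA (g : G) :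
      mulCoboundary (fun a => τ a g / ν a g) = mulCoboundary (fun a => τ' a g / ν' a g) := by
    rw [hpair.mulCoboundary_tau_div_nu_apply, hpair'.mulCoboundary_tau_div_nu_apply]
  refine ⟨fun a => ratioHom (hcobG a), fun a b => ?_, fun a x => ?_⟩
  · ext g
    exact congrArg Units.val (div_mul_div_of_mulCoboundary_eq (hcobA g) a b)
  · exact (mul_div_cancel _ _).symm

theorem admissible_pairs_differ_by_character {G : Type*} [Group G] [Finite G]
    (ω : G → G → G → ℂˣ) (hω : IsNormalized3Cocycle ω)
    (A : Subgroup G) (hA : A ≤ Subgroup.center G)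
    (τ τ' : ↥A → G → ℂˣ) (ν ν' : ↥A → (G →* ℂˣ))
    (hpair : IsAdmissiblePair ω A τ ν) (hpair' : IsAdmissiblePair ω A τ' ν') :
    ∃ f : ↥A → (G →* ℂˣ),
      (∀ a b : ↥A, f (a * b) = f a * f b) ∧
      ∀ (a : ↥A) (x : G),
        τ' a x / ν' a x = (τ a x / ν a x) * f a x :=
  admissible_pairs_differ_by_character_general ω A τ τ' ν ν' hpair hpair'
end

section
/- Let G be a finite group, ω a normalized 3-cocycle on G with values in ℂˣ, a ∈ Z(G) an element of order 2, A := {1, a}, and (τ, ν) an ω-admissible pair for A. Then for x, y ∈ A the quantity τ_x(y)·τ_y(x)/(ν(x)(y)·ν(y)(x)) equals τ_a(a)² when x = y = a, and equals 1 otherwise. Moreover τ_a(a)² = ω(a,a,a), this value lies in {1, −1}, and ω(a,a,a) = 1 if and only if the restriction of ω to A is a 3-coboundary of A, i.e., there exists a map κ : A × A → ℂˣ with κ(x,1) = κ(1,x) = 1 such that ω(x,y,w) = κ(y,w)·κ(x,y*w)/(κ(x*y,w)·κ(x,y)) for all x, y, w ∈ A. -/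
lemma order_two_cases {G : Type*} [Group G] {a : G} (ha2 : a * a = 1)
    {x : G} (hx : x ∈ Subgroup.zpowers a) : x = 1 ∨ x = a := by
  obtain ⟨n, rfl⟩ := hx
  have h2 : a ^ (2 : ℤ) = 1 := by
    rw [show (2:ℤ) = 1 + 1 from rfl, zpow_add, zpow_one]; exact ha2
  show a ^ n = 1 ∨ a ^ n = a
  rcases Int.even_or_odd n with ⟨k, rfl⟩ | ⟨k, rfl⟩
  · left; rw [show k + k = 2 * k by ring, zpow_mul, h2, one_zpow]
  · right; rw [zpow_add, zpow_mul, h2, one_zpow, zpow_one, one_mul]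

section Defs

theorem bicharacter_order_two {G : Type*} [Group G] [Finite G]
    (ω : G → G → G → ℂˣ) (hω : IsNormalized3Cocycle ω)
    (a : G) (haZ : a ∈ Subgroup.center G) (ha2 : a * a = 1) (ha1 : a ≠ 1)
    (τ : ↥(Subgroup.zpowers a) → G → ℂˣ)
    (ν : ↥(Subgroup.zpowers a) → (G →* ℂˣ))
    (hadm : IsAdmissiblePair ω (Subgroup.zpowers a) τ ν) :
    let za : ↥(Subgroup.zpowers a) := ⟨a, Subgroup.mem_zpowers a⟩
    (∀ x y : ↥(Subgroup.zpowers a),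
      ((x = za ∧ y = za) →
        τ x (y : G) * τ y (x : G) / (ν x (y : G) * ν y (x : G))
          = (τ za a) ^ 2) ∧
      (¬(x = za ∧ y = za) →
        τ x (y : G) * τ y (x : G) / (ν x (y : G) * ν y (x : G)) = 1)) ∧
    (τ za a) ^ 2 = ω a a a ∧
    (ω a a a = 1 ∨ ω a a a = -1) ∧
    (ω a a a = 1 ↔
      ∃ κ : ↥(Subgroup.zpowers a) → ↥(Subgroup.zpowers a) → ℂˣ,
        (∀ x, κ x 1 = 1 ∧ κ 1 x = 1) ∧
        ∀ x y w : ↥(Subgroup.zpowers a),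
          ω (x : G) (y : G) (w : G)
            = κ y w * κ x (y * w) / (κ (x * y) w * κ x y)) := by
  intro za
  obtain ⟨hτ1, hτa1, hθτ, hν1, hθν⟩ := hadm
  have hcoc := hω.1
  have hnorm := hω.2
  have hcases : ∀ x : ↥(Subgroup.zpowers a), x = 1 ∨ x = za := by
    intro x
    rcases order_two_cases ha2 x.2 with h | h
    · exact Or.inl (Subtype.ext h)
    · exact Or.inr (Subtype.ext h)
  -- (τ za a)^2 = ω a a a
  have hc : ∀ x : G, cjg a x = a := by
    intro x
    have h := Subgroup.mem_center_iff.mp haZ x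
    unfold cjg
    rw [mul_assoc, ← h, ← mul_assoc, inv_mul_cancel, one_mul]
  have hθaaa : theta ω a a a = ω a a a := by
    unfold theta
    rw [hc, hc, mul_div_assoc, div_self', mul_one]
  have hsq : (τ za a) ^ 2 = ω a a a := by
    have h : theta ω a a a = τ za a * τ za a / τ za (a * a) := hθτ za a a
    rw [hθaaa, ha2, hτa1 za, div_one] at h
    rw [sq, ← h]
  -- ω a a a squares to 1
  have hsq1 : ω a a a * ω a a a = 1 := by
    have h := hcoc a a a a
    rw [ha2, hnorm a 1 a (Or.inr (Or.inl rfl)), hnorm 1 a a (Or.inl rfl),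
      hnorm a a 1 (Or.inr (Or.inr rfl)), mul_one] at h
    rw [h, one_mul]
  refine ⟨?_, hsq, ?_, ?_⟩
  · intro x y
    constructor
    · rintro ⟨rfl, rfl⟩
      have hν : ν za a * ν za a = 1 := by
        rw [← map_mul, ha2, map_one]
      show τ za a * τ za a / (ν za a * ν za a) = (τ za a) ^ 2
      rw [hν, div_one, sq]
    · intro h
      rcases hcases x with rfl | rfl <;> rcases hcases y with rfl | rfl
      · simp [hτ1, hτa1, hν1]
      · simp [hτ1, hτa1, hν1]
      · simp [hτ1, hτa1, hν1]
      · exact absurd ⟨rfl, rfl⟩ h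
  · have h : ((ω a a a : ℂ)) * (ω a a a : ℂ) = 1 := by
      simpa using congrArg Units.val hsq1
    rcases mul_self_eq_one_iff.mp h with h1 | h1
    · exact Or.inl (Units.ext (by simpa using h1))
    · exact Or.inr (Units.ext (by simpa using h1))
  · constructor
    · intro h1
      refine ⟨fun _ _ => 1, fun x => ⟨rfl, rfl⟩, ?_⟩
      intro x y w
      have : ω (x : G) (y : G) (w : G) = 1 := by
        rcases order_two_cases ha2 x.2 with hx | hx
        · exact hnorm _ _ _ (Or.inl hx)
        · rcases order_two_cases ha2 y.2 with hy | hy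
          · exact hnorm _ _ _ (Or.inr (Or.inl hy))
          · rcases order_two_cases ha2 w.2 with hw | hw
            · exact hnorm _ _ _ (Or.inr (Or.inr hw))
            · rw [hx, hy, hw]; exact h1
      rw [this]; simp
    · rintro ⟨κ, hκ, hco⟩
      have hzaza : za * za = (1 : ↥(Subgroup.zpowers a)) := Subtype.ext ha2
      have h : ω a a a = κ za za * κ za (za * za) / (κ (za * za) za * κ za za) :=
        hco za za za
      rw [hzaza, (hκ za).1, (hκ za).2, mul_one, one_mul, div_self'] at h
      exact h
end Defs
end
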